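/- There exist truth-preserving translations between LTL_f and co-safe LTL: (i) there is a map T from LTL_f formulas to co-safe LTL formulas such that a finite trace σ (with the atom Last holding exactly at its final position) satisfies φ if and only if every infinite extension σ·σ' (with Last never holding in σ') satisfies T(φ); and (ii) every co-safe LTL formula φ, read as an LTL_f formula, satisfies: an infinite trace σ satisfies φ if and only if some finite prefix σ_{≤i} of σ satisfies φ. -/

import Mathlib

/-- LTL formulas over atoms `α`, with constants `tt`/`ff`, negation, conjunction,
disjunction, next `○` and until `U`. -/
inductive LTL (α : Type) : Type where
  | tt : LTL α
  | ff : LTL α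
  | atom : α → LTL α
  | not : LTL α → LTL α
  | and : LTL α → LTL α → LTL α
  | or : LTL α → LTL α → LTL α
  | next : LTL α → LTL α
  | untl : LTL α → LTL α → LTL α

/-- Satisfaction `⟨σ,i⟩ ⊨ φ` over infinite traces `σ : ℕ → Set α`. -/
def SatInf {α : Type} (σ : ℕ → Set α) : ℕ → LTL α → Prop
  | _, .tt => True
  | _, .ff => False
  | i, .atom p => p ∈ σ i
  | i, .not φ => ¬ SatInf σ i φ
  | i, .and φ ψ => SatInf σ i φ ∧ SatInf σ i ψ
  | i, .or φ ψ => SatInf σ i φ ∨ SatInf σ i ψ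
  | i, .next φ => SatInf σ (i + 1) φ
  | i, .untl φ ψ => ∃ j, i ≤ j ∧ SatInf σ j ψ ∧ ∀ k, i ≤ k → k < j → SatInf σ k φ

/-- Satisfaction `⟨σ,i⟩ ⊨ φ` over finite traces `σ : List (Set α)`;
positions of `σ` are the indices `< σ.length`. -/
def SatFin {α : Type} (σ : List (Set α)) : ℕ → LTL α → Prop
  | _, .tt => True
  | _, .ff => False
  | i, .atom p => p ∈ σ.getD i ∅
  | i, .not φ => ¬ SatFin σ i φ
  | i, .and φ ψ => SatFin σ i φ ∧ SatFin σ i ψ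
  | i, .or φ ψ => SatFin σ i φ ∨ SatFin σ i ψ
  | i, .next φ => i + 1 < σ.length ∧ SatFin σ (i + 1) φ
  | i, .untl φ ψ =>
      ∃ j, i ≤ j ∧ j < σ.length ∧ SatFin σ j ψ ∧ ∀ k, i ≤ k → k < j → SatFin σ k φ

/-- The co-safe fragment of LTL: negation on atoms only. -/
inductive CoSafe {α : Type} : LTL α → Prop
  | atom (p : α) : CoSafe (.atom p)
  | natom (p : α) : CoSafe (.not (.atom p))
  | and {φ ψ : LTL α} : CoSafe φ → CoSafe ψ → CoSafe (.and φ ψ)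
  | or {φ ψ : LTL α} : CoSafe φ → CoSafe ψ → CoSafe (.or φ ψ)
  | next {φ : LTL α} : CoSafe φ → CoSafe (.next φ)
  | untl {φ ψ : LTL α} : CoSafe φ → CoSafe ψ → CoSafe (.untl φ ψ)

/-- The finite prefix `σ₀, …, σᵢ` of an infinite trace `σ`. -/
def prefixUpTo {α : Type} (σ : ℕ → Set α) (i : ℕ) : List (Set α) :=
  (List.range (i + 1)).map σ

/-- Concatenation `w · σ'` of a finite trace with an infinite trace. -/
def appendInf {α : Type} (w : List (Set α)) (σ' : ℕ → Set α) : ℕ → Set α :=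
  fun n => w.getD n (σ' (n - w.length))

/-- LTL_f formulas over atoms `α` in negation normal form, with `always` (□)
and weak next `wnext` (•) primitive.  The distinguished atom `Last` is not in
`α`; traces assign truth values to atoms in `Option α`, where `none` plays the
role of `Last` and `some p` the role of `p ∈ AP`. -/
inductive LTLf (α : Type) : Type where
  | atom : α → LTLf α
  | natom : α → LTLf α
  | and : LTLf α → LTLf α → LTLf α
  | or : LTLf α → LTLf α → LTLf α
  | next : LTLf α → LTLf α
  | untl : LTLf α → LTLf α → LTLf α
  | always : LTLf α → LTLf α
  | wnext : LTLf α → LTLf α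

/-- Satisfaction of LTL_f formulas over finite traces of truth assignments
over `AP ∪ {Last}` (encoded as `Set (Option α)`, with `Last := none`). -/
def SatLTLf {α : Type} (σ : List (Set (Option α))) : ℕ → LTLf α → Prop
  | i, .atom p => some p ∈ σ.getD i ∅
  | i, .natom p => some p ∉ σ.getD i ∅
  | i, .and φ ψ => SatLTLf σ i φ ∧ SatLTLf σ i ψ
  | i, .or φ ψ => SatLTLf σ i φ ∨ SatLTLf σ i ψ
  | i, .next φ => i + 1 < σ.length ∧ SatLTLf σ (i + 1) φ
  | i, .untl φ ψ =>
      ∃ j, i ≤ j ∧ j < σ.length ∧ SatLTLf σ j ψ ∧ ∀ k, i ≤ k → k < j → SatLTLf σ k φ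
  | i, .always φ => ∀ j, i ≤ j → j < σ.length → SatLTLf σ j φ
  | i, .wnext φ => i + 1 < σ.length → SatLTLf σ (i + 1) φ

/-- The translation τ from LTL_f to co-safe LTL: it commutes with atoms,
negated atoms, ∧, ∨, ○ and U, and τ(□φ) = τ(φ) U (Last ∧ τ(φ)),
τ(•φ) = ¬Last → ○τ(φ) (i.e. Last ∨ ○τ(φ)). -/
def tauTr {α : Type} : LTLf α → LTL (Option α)
  | .atom p => .atom (some p)
  | .natom p => .not (.atom (some p))
  | .and φ ψ => .and (tauTr φ) (tauTr ψ)
  | .or φ ψ => .or (tauTr φ) (tauTr ψ)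
  | .next φ => .next (tauTr φ)
  | .untl φ ψ => .untl (tauTr φ) (tauTr ψ)
  | .always φ => .untl (tauTr φ) (.and (.atom none) (tauTr φ))
  | .wnext φ => .or (.atom none) (.next (tauTr φ))

/-!
For (i), a structural induction shows that on any infinite trace that agrees with `σ` on its
positions and marks exactly its last position with `Last`, the translation holds at a position
of `σ` exactly when the LTL_f formula does.

For (ii), a co-safe formula inspects only finitely many positions: if it holds on an infinite
trace, then by induction it holds on all sufficiently long prefixes (the finitely many witnesses
below an `U` are combined as eventually-statements along `atTop`); conversely, satisfaction on a
prefix transfers to the infinite trace, because nothing beyond the prefix is inspected from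
positions inside it.
-/

open Filter

/-- Unlike `tauTr`, `○` and `U` are guarded by `¬Last`: otherwise their witnesses could lie in
the infinite extension. -/
def ltlfToCoSafe {α : Type} : LTLf α → LTL (Option α)
  | .atom p => .atom (some p)
  | .natom p => .not (.atom (some p))
  | .and φ ψ => .and (ltlfToCoSafe φ) (ltlfToCoSafe ψ)
  | .or φ ψ => .or (ltlfToCoSafe φ) (ltlfToCoSafe ψ)
  | .next φ => .and (.not (.atom none)) (.next (ltlfToCoSafe φ))
  | .untl φ ψ => .untl (.and (ltlfToCoSafe φ) (.not (.atom none))) (ltlfToCoSafe ψ)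
  | .always φ => .untl (ltlfToCoSafe φ) (.and (.atom none) (ltlfToCoSafe φ))
  | .wnext φ => .or (.atom none) (.next (ltlfToCoSafe φ))

theorem coSafe_ltlfToCoSafe {α : Type} (φ : LTLf α) : CoSafe (ltlfToCoSafe φ) := by
  induction φ with
  | atom p => exact .atom _
  | natom p => exact .natom _
  | and _ _ ihφ ihψ => exact .and ihφ ihψ
  | or _ _ ihφ ihψ => exact .or ihφ ihψ
  | next _ ih => exact .and (.natom _) (.next ih)
  | untl _ _ ihφ ihψ => exact .untl (.and ihφ (.natom _)) ihψ
  | always _ ih => exact .untl ih (.and (.atom _) ih)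
  | wnext _ ih => exact .or (.atom _) (.next ih)

theorem satLTLf_iff_satInf_ltlfToCoSafe {α : Type} {σ : List (Set (Option α))}
    {ρ : ℕ → Set (Option α)} (hagree : ∀ i < σ.length, ρ i = σ.getD i ∅)
    (hlast : ∀ i, none ∈ ρ i ↔ i + 1 = σ.length) (φ : LTLf α) {i : ℕ} (hi : i < σ.length) :
    SatLTLf σ i φ ↔ SatInf ρ i (ltlfToCoSafe φ) := by
  induction φ generalizing i with
  | atom p | natom p => simp only [SatLTLf, SatInf, ltlfToCoSafe, hagree i hi]
  | and φ ψ ihφ ihψ | or φ ψ ihφ ihψ =>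
    simp only [SatLTLf, SatInf, ltlfToCoSafe, ihφ hi, ihψ hi]
  | next φ ih =>
    simp only [SatLTLf, SatInf, ltlfToCoSafe, hlast]
    constructor
    · rintro ⟨hnext, h⟩
      exact ⟨by omega, (ih hnext).mp h⟩
    · rintro ⟨hnotLast, h⟩
      have hnext : i + 1 < σ.length := by omega
      exact ⟨hnext, (ih hnext).mpr h⟩
  | untl φ ψ ihφ ihψ =>
    simp only [SatLTLf, SatInf, ltlfToCoSafe, hlast]
    constructor
    · rintro ⟨j, hij, hj, hψ, hφ⟩
      exact ⟨j, hij, (ihψ hj).mp hψ,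
        fun k hik hkj => ⟨(ihφ (hkj.trans hj)).mp (hφ k hik hkj), by omega⟩⟩
    · rintro ⟨j, hij, hψ, hφ⟩
      have hj : j < σ.length := by
        by_contra!
        exact (hφ (σ.length - 1) (by omega) (by omega)).2 (by omega)
      exact ⟨j, hij, hj, (ihψ hj).mpr hψ,
        fun k hik hkj => (ihφ (hkj.trans hj)).mpr (hφ k hik hkj).1⟩
  | always φ ih =>
    simp only [SatLTLf, SatInf, ltlfToCoSafe, hlast]
    constructor
    · intro h
      exact ⟨σ.length - 1, by omega, ⟨by omega, (ih (by omega)).mp (h _ (by omega) (by omega))⟩,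
        fun k hik _ => (ih (by omega)).mp (h k hik (by omega))⟩
    · rintro ⟨j, hij, ⟨hj, hφj⟩, hφ⟩ k hik hk
      obtain rfl | hkj := eq_or_lt_of_le (show k ≤ j by omega)
      · exact (ih hk).mpr hφj
      · exact (ih hk).mpr (hφ k hik hkj)
  | wnext φ ih =>
    simp only [SatLTLf, SatInf, ltlfToCoSafe, hlast]
    by_cases hend : i + 1 = σ.length
    · simp [hend]
    · have hnext : i + 1 < σ.length := by omega
      simp only [hend, hnext, ih hnext, false_or, forall_const]

theorem appendInf_of_lt {α : Type} (w : List (Set α)) (σ' : ℕ → Set α) {i : ℕ}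
    (hi : i < w.length) : appendInf w σ' i = w.getD i ∅ := by
  simp only [appendInf, List.getD_eq_getElem _ _ hi]

theorem appendInf_of_le {α : Type} (w : List (Set α)) (σ' : ℕ → Set α) {i : ℕ}
    (hi : w.length ≤ i) : appendInf w σ' i = σ' (i - w.length) := by
  simp only [appendInf, List.getD_eq_default _ _ hi]

theorem last_mem_appendInf_iff {α : Type} {σ : List (Set (Option α))}
    (hlast : ∀ i < σ.length, (none ∈ σ.getD i ∅ ↔ i = σ.length - 1))
    {σ' : ℕ → Set (Option α)} (hσ' : ∀ n, none ∉ σ' n) (i : ℕ) :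
    none ∈ appendInf σ σ' i ↔ i + 1 = σ.length := by
  rcases lt_or_ge i σ.length with hi | hi
  · rw [appendInf_of_lt σ σ' hi, hlast i hi]
    omega
  · rw [appendInf_of_le σ σ' hi]
    exact iff_of_false (hσ' _) (by omega)

theorem length_prefixUpTo {α : Type} (σ : ℕ → Set α) (i : ℕ) :
    (prefixUpTo σ i).length = i + 1 := by
  simp [prefixUpTo]

theorem getD_prefixUpTo {α : Type} (σ : ℕ → Set α) {i j : ℕ} (h : j ≤ i) :
    (prefixUpTo σ i).getD j ∅ = σ j := by
  rw [List.getD_eq_getElem _ _ (by rw [length_prefixUpTo]; omega)]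
  simp [prefixUpTo]

namespace CoSafe

variable {α : Type} {φ : LTL α}

theorem satInf_of_satFin (hφ : CoSafe φ) {σ : ℕ → Set α} {w : List (Set α)}
    (hw : ∀ k < w.length, w.getD k ∅ = σ k) {j : ℕ} (hj : j < w.length) (h : SatFin w j φ) :
    SatInf σ j φ := by
  induction hφ generalizing j with
  | atom p | natom p => simpa only [SatFin, SatInf, hw j hj] using h
  | and _ _ ihφ ihψ => exact ⟨ihφ hj h.1, ihψ hj h.2⟩
  | or _ _ ihφ ihψ => exact h.imp (ihφ hj) (ihψ hj)
  | next _ ih => exact ih h.1 h.2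
  | untl _ _ ihφ ihψ =>
    obtain ⟨j', hjj', hj', hψ, hφ⟩ := h
    exact ⟨j', hjj', ihψ hj' hψ, fun k hjk hkj => ihφ (hkj.trans hj') (hφ k hjk hkj)⟩

theorem eventually_satFin_prefixUpTo (hφ : CoSafe φ) {σ : ℕ → Set α} {j : ℕ}
    (h : SatInf σ j φ) : ∀ᶠ i in atTop, SatFin (prefixUpTo σ i) j φ := by
  induction hφ generalizing j with
  | atom p | natom p =>
    filter_upwards [eventually_ge_atTop j] with i hji
    simpa only [SatFin, SatInf, getD_prefixUpTo σ hji] using h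
  | and _ _ ihφ ihψ => exact (ihφ h.1).and (ihψ h.2)
  | or _ _ ihφ ihψ =>
    rcases h with h | h
    · exact (ihφ h).mono fun _ => Or.inl
    · exact (ihψ h).mono fun _ => Or.inr
  | next _ ih =>
    filter_upwards [ih h, eventually_ge_atTop (j + 1)] with i hsat hi
    exact ⟨by rw [length_prefixUpTo]; omega, hsat⟩
  | untl _ _ ihφ ihψ =>
    obtain ⟨j', hjj', hψ, hφ⟩ := h
    have hφ_ev : ∀ᶠ i in atTop, ∀ k ∈ Finset.Ico j j', SatFin (prefixUpTo σ i) k _ :=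
      (eventually_all_finset _).2 fun k hk =>
        ihφ (hφ k (Finset.mem_Ico.1 hk).1 (Finset.mem_Ico.1 hk).2)
    filter_upwards [ihψ hψ, hφ_ev, eventually_ge_atTop j'] with i hψi hφi hi
    exact ⟨j', hjj', by rw [length_prefixUpTo]; omega, hψi,
      fun k hjk hkj => hφi k (Finset.mem_Ico.2 ⟨hjk, hkj⟩)⟩

theorem satInf_iff_exists_satFin_prefixUpTo (hφ : CoSafe φ) (σ : ℕ → Set α) :
    SatInf σ 0 φ ↔ ∃ i, SatFin (prefixUpTo σ i) 0 φ :=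
  ⟨fun h => (hφ.eventually_satFin_prefixUpTo h).exists,
    fun ⟨i, h⟩ => hφ.satInf_of_satFin (fun k hk => getD_prefixUpTo σ (by
      rw [length_prefixUpTo] at hk; omega)) (by rw [length_prefixUpTo]; omega) h⟩

end CoSafe

/-- There exist truth-preserving translations between LTL_f and
co-safe LTL: (i) there is a map `T` from LTL_f formulas to co-safe LTL formulas
such that a (nonempty) finite trace σ, with Last holding exactly at its final
position, satisfies φ iff every infinite extension σ·σ' with Last never holding
in σ' satisfies `T φ`; and (ii) every co-safe LTL formula φ, read as an LTL_f
formula (i.e. interpreted over finite traces), satisfies: an infinite trace σ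
satisfies φ iff some finite prefix σ_{≤i} of σ satisfies φ. -/
theorem truth_preserving_translations {AP : Type} :
    (∃ T : LTLf AP → LTL (Option AP),
      (∀ φ : LTLf AP, CoSafe (T φ)) ∧
      ∀ σ : List (Set (Option AP)), σ ≠ [] →
        (∀ i < σ.length,
            ((none : Option AP) ∈ σ.getD i ∅ ↔ i = σ.length - 1)) →
        ∀ φ : LTLf AP,
          (SatLTLf σ 0 φ ↔
            ∀ σ' : ℕ → Set (Option AP), (∀ n, (none : Option AP) ∉ σ' n) →
              SatInf (appendInf σ σ') 0 (T φ))) ∧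
    (∀ (φ : LTL AP), CoSafe φ → ∀ σ : ℕ → Set AP,
        (SatInf σ 0 φ ↔ ∃ i : ℕ, SatFin (prefixUpTo σ i) 0 φ)) := by
  refine ⟨⟨ltlfToCoSafe, coSafe_ltlfToCoSafe, fun σ hne hlast φ => ?_⟩,
    fun φ hφ σ => hφ.satInf_iff_exists_satFin_prefixUpTo σ⟩
  have hpos : 0 < σ.length := List.length_pos_iff.mpr hne
  have hsat (σ' : ℕ → Set (Option AP)) (hσ' : ∀ n, none ∉ σ' n) :=
    satLTLf_iff_satInf_ltlfToCoSafe (fun i hi => appendInf_of_lt σ σ' hi)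
      (last_mem_appendInf_iff hlast hσ') φ hpos
  exact ⟨fun h σ' hσ' => (hsat σ' hσ').mp h,
    fun h => (hsat _ fun _ => Set.notMem_empty _).mpr (h _ fun _ => Set.notMem_empty _)⟩
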